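/- arXiv:1202.2481 — 5 statements merged into one kernel-verified Lean document; each statement's English description precedes it below -/
import Mathlib

section
/- If 0 → A^n → A^{n−1} → ... → A^1 → A^0 → 0 is an exact sequence of exact chain complexes of R-modules, then for every integer m there is an induced exact sequence of modules 0 → Z_m(A^n) → Z_m(A^{n−1}) → ... → Z_m(A^1) → Z_m(A^0) → 0. -/
/-!
Exactness of the cycle sequence at `Z_m(A^j)` amounts to: every `m`-cycle of `A^j` in the image of
`d_j` is the image of an `m`-cycle of `A^{j+1}`. This is trivial for `j ≥ n`, where `A^{j+1} = 0`,
and descends from `(j + 1, m - 1)` to `(j, m)` by a diagram chase: if `z = d_j y` is a cycle, then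
`∂y` is an `(m-1)`-cycle of `A^{j+1}` killed by `d_j`, hence `∂y = d_{j+1} v` for a cycle `v`;
exactness of `A^{j+2}` gives `v = ∂t`, and `y - d_{j+1} t` is a cycle lifting `z`.
-/

open CategoryTheory Limits

/-- A chain map sends cycles to cycles. -/
lemma chainMap_mapsTo_cycles {R : Type} [Ring R] {K L : ChainComplex (ModuleCat R) ℤ}
    (φ : K ⟶ L) (m : ℤ) :
    ∀ x ∈ LinearMap.ker (K.d m (m - 1)).hom, (φ.f m).hom x ∈ LinearMap.ker (L.d m (m - 1)).hom := by
  intro x hx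
  rw [LinearMap.mem_ker] at hx ⊢
  have h := congrArg (fun g => g.hom x) (φ.comm m (m - 1))
  simp only [ModuleCat.hom_comp, LinearMap.comp_apply] at h
  rw [show (L.d m (m - 1)).hom ((φ.f m).hom x) = (φ.f (m - 1)).hom ((K.d m (m - 1)).hom x) from h, hx,
    map_zero]

/-- An exact sequence of chain complexes `0 → A^n → ⋯ → A^1 → A^0 → 0`, encoded as an
`ℕ`-indexed degreewise exact sequence which vanishes in degrees `> n`. -/
structure ComplexSequence (R : Type) [Ring R] (n : ℕ) where
  A : ℕ → ChainComplex (ModuleCat R) ℤ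
  d : ∀ i : ℕ, A (i + 1) ⟶ A i
  surj : ∀ m : ℤ, Function.Surjective ((d 0).f m)
  exact : ∀ (i : ℕ) (m : ℤ), Function.Exact ((d (i + 1)).f m) ((d i).f m)
  bounded : ∀ i : ℕ, n < i → ∀ m : ℤ, Subsingleton ((A i).X m)

section

variable {R : Type} [Ring R]

lemma HomologicalComplex.exists_d_eq_of_exactAt (K : ChainComplex (ModuleCat R) ℤ) {m : ℤ}
    (hK : K.ExactAt (m - 1)) (x : K.X (m - 1)) (hx : K.d (m - 1) (m - 1 - 1) x = 0) :
    ∃ y : K.X m, K.d m (m - 1) y = x := by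
  rw [HomologicalComplex.exactAt_iff' K m (m - 1) (m - 1 - 1) (by simp) (by simp)] at hK
  exact (ShortComplex.moduleCat_exact_iff _).mp hK x hx

def LiftsCycles {K L : ChainComplex (ModuleCat R) ℤ} (φ : K ⟶ L) (m : ℤ) : Prop :=
  ∀ z : L.X m, L.d m (m - 1) z = 0 → (∃ y, φ.f m y = z) →
    ∃ w : K.X m, K.d m (m - 1) w = 0 ∧ φ.f m w = z

lemma liftsCycles_of_subsingleton {K L : ChainComplex (ModuleCat R) ℤ} (φ : K ⟶ L) (m : ℤ)
    [Subsingleton (K.X m)] : LiftsCycles φ m := by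
  rintro z - ⟨y, rfl⟩
  exact ⟨y, by rw [Subsingleton.elim y 0, map_zero], rfl⟩

lemma LiftsCycles.of_prev {A B C : ChainComplex (ModuleCat R) ℤ} {f : A ⟶ B} {g : B ⟶ C}
    {m : ℤ} (hfg : Function.Exact (f.f m) (g.f m))
    (hfg' : Function.Exact (f.f (m - 1)) (g.f (m - 1))) (hA : A.ExactAt (m - 1))
    (hf : LiftsCycles f (m - 1)) : LiftsCycles g m := by
  rintro z hz ⟨y, rfl⟩
  have hdy : g.f (m - 1) (B.d m (m - 1) y) = 0 := by
    rw [← ConcreteCategory.comp_apply, ← g.comm, ConcreteCategory.comp_apply, hz]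
  have hdy_cycle : B.d (m - 1) (m - 1 - 1) (B.d m (m - 1) y) = 0 := by
    rw [← ConcreteCategory.comp_apply, B.d_comp_d]; rfl
  obtain ⟨v, hv_cycle, hv⟩ := hf _ hdy_cycle ((hfg' _).mp hdy)
  obtain ⟨t, ht⟩ := A.exists_d_eq_of_exactAt hA v hv_cycle
  refine ⟨y - f.f m t, ?_, by rw [map_sub, hfg.apply_apply_eq_zero, sub_zero]⟩
  rw [map_sub, ← ConcreteCategory.comp_apply, f.comm, ConcreteCategory.comp_apply, ht, hv,
    sub_self]

lemma surjective_restrict_cycles {K L : ChainComplex (ModuleCat R) ℤ} {φ : K ⟶ L} {m : ℤ}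
    (hsurj : Function.Surjective (φ.f m)) (hφ : LiftsCycles φ m) :
    Function.Surjective ((φ.f m).hom.restrict (chainMap_mapsTo_cycles φ m)) := by
  rintro ⟨z, hz⟩
  obtain ⟨w, hw, rfl⟩ := hφ z hz (hsurj z)
  exact ⟨⟨w, hw⟩, rfl⟩

lemma exact_restrict_cycles {A B C : ChainComplex (ModuleCat R) ℤ} {f : A ⟶ B} {g : B ⟶ C}
    {m : ℤ} (hfg : Function.Exact (f.f m) (g.f m)) (hf : LiftsCycles f m) :
    Function.Exact ((f.f m).hom.restrict (chainMap_mapsTo_cycles f m))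
      ((g.f m).hom.restrict (chainMap_mapsTo_cycles g m)) := by
  intro z
  constructor
  · intro hgz
    obtain ⟨w, hw, hwz⟩ := hf z.1 z.2 ((hfg z.1).mp (congrArg Subtype.val hgz))
    exact ⟨⟨w, hw⟩, Subtype.ext hwz⟩
  · rintro ⟨w, rfl⟩
    exact Subtype.ext (hfg.apply_apply_eq_zero w.1)

end

lemma ComplexSequence.liftsCycles {R : Type} [Ring R] {n : ℕ} (S : ComplexSequence R n)
    (hA : ∀ (i : ℕ) (m : ℤ), (S.A i).ExactAt m) (j : ℕ) (m : ℤ) : LiftsCycles (S.d j) m := by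
  obtain ⟨k, hk⟩ : ∃ k, n < j + k := ⟨n + 1, by omega⟩
  induction k generalizing j m with
  | zero =>
    have := S.bounded (j + 1) (by omega) m
    exact liftsCycles_of_subsingleton _ m
  | succ k ih =>
    exact (ih (j + 1) (m - 1) (by omega)).of_prev (S.exact j m) (S.exact j (m - 1)) (hA _ _)

/-- If `0 → A^n → A^{n-1} → ⋯ → A^1 → A^0 → 0` is an exact sequence of exact chain
complexes of `R`-modules, then for every integer `m` the induced sequence of cycle modules
`0 → Z_m(A^n) → ⋯ → Z_m(A^1) → Z_m(A^0) → 0`, given by the restrictions of the chain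
maps, is exact. -/
theorem cycles_exact_of_exact_sequence_of_exact_complexes (R : Type) [Ring R] (n : ℕ)
    (S : ComplexSequence R n) (hA : ∀ (i : ℕ) (m : ℤ), (S.A i).ExactAt m) (m : ℤ) :
    Function.Surjective (((S.d 0).f m).hom.restrict (chainMap_mapsTo_cycles (S.d 0) m)) ∧
    ∀ i : ℕ, Function.Exact
      (((S.d (i + 1)).f m).hom.restrict (chainMap_mapsTo_cycles (S.d (i + 1)) m))
      (((S.d i).f m).hom.restrict (chainMap_mapsTo_cycles (S.d i) m)) := by
  exact ⟨surjective_restrict_cycles (S.surj m) (S.liftsCycles hA 0 m),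
    fun i => exact_restrict_cycles (S.exact i m) (S.liftsCycles hA (i + 1) m)⟩
end

section
/- A chain complex X of R-modules is exact with Z_m(X) of projective dimension at most n for every m if and only if X has projective dimension at most n in the category of chain complexes, i.e., there is an exact sequence 0 → P^n → ... → P^0 → X → 0 of chain complexes in which each P^i is a projective object of Ch(R). -/
/-!
A complex of modules is a projective object of `Ch(R)` exactly when it is contractible with
projective components, equivalently when it is exact with projective cycles. If `φ : P ⟶ X` is
a degreewise surjection from a projective complex with kernel complex `K`, a diagram chase shows
that `X` is exact iff `K` is, and then `0 → Z_m K → Z_m P → Z_m X → 0` is short exact with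
projective middle term, so `pd Z_m X ≤ n + 1 ↔ pd Z_m K ≤ n` by dimension shifting. Both
directions follow by induction on `n`: covering `X` by the free disks on its components builds
the resolution, and passing to the kernel of its augmentation shortens a given one.
-/

open CategoryTheory Limits

/-- A resolution `0 → P_n → ⋯ → P_1 → P_0 → X → 0` of length at most `n` of the module `X`,
encoded as an `ℕ`-indexed exact sequence which vanishes in degrees `> n`. -/
structure ResolutionOfLength (R : Type) [Ring R] (n : ℕ) (X : ModuleCat R) where
  P : ℕ → ModuleCat R
  d : ∀ i : ℕ, P (i + 1) ⟶ P i
  ε : P 0 ⟶ X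
  surj : Function.Surjective ε
  exact₀ : Function.Exact (d 0) ε
  exact : ∀ i : ℕ, Function.Exact (d (i + 1)) (d i)
  bounded : ∀ i : ℕ, n < i → Subsingleton (P i)

/-- A module has projective dimension at most `n` if it admits a projective resolution of
length `n`. -/
def HasProjDimLE (R : Type) [Ring R] (n : ℕ) (X : ModuleCat R) : Prop :=
  ∃ res : ResolutionOfLength R n X, ∀ i : ℕ, Module.Projective R (res.P i)

/-- An exact sequence of chain complexes `0 → P^n → ⋯ → P^1 → P^0 → X → 0`, encoded as an
`ℕ`-indexed degreewise exact sequence which vanishes in degrees `> n`. -/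
structure ComplexSequenceTo (R : Type) [Ring R] (n : ℕ)
    (X : ChainComplex (ModuleCat R) ℤ) where
  A : ℕ → ChainComplex (ModuleCat R) ℤ
  d : ∀ i : ℕ, A (i + 1) ⟶ A i
  ε : A 0 ⟶ X
  surj : ∀ m : ℤ, Function.Surjective ((ε).f m)
  exact₀ : ∀ m : ℤ, Function.Exact ((d 0).f m) ((ε).f m)
  exact : ∀ (i : ℕ) (m : ℤ), Function.Exact ((d (i + 1)).f m) ((d i).f m)
  bounded : ∀ i : ℕ, n < i → ∀ m : ℤ, Subsingleton ((A i).X m)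

universe v

noncomputable section

variable {R : Type} [Ring R]

lemma ModuleCat.injective_of_exact_of_subsingleton {M N P : ModuleCat.{v} R} {f : M ⟶ N}
    {g : N ⟶ P} [Subsingleton M] (h : Function.Exact f g) : Function.Injective g :=
  (LinearMap.injective_iff_eq_zero_of_exact (f := f.hom) h).2
    (by ext x; simp [Subsingleton.elim x 0])

namespace ResolutionOfLength

variable {n : ℕ} {M : ModuleCat.{v} R}

def self (n : ℕ) (M : ModuleCat.{v} R) : ResolutionOfLength R n M where
  P | 0 => M | _ + 1 => ModuleCat.of R PUnit.{v + 1}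
  d _ := 0
  ε := 𝟙 M
  surj := Function.surjective_id
  exact₀ y := by simp [eq_comm]
  exact _ y := by simp [Subsingleton.elim y 0]
  bounded
    | 0, h => absurd h (Nat.not_lt_zero n)
    | _ + 1, _ => inferInstanceAs (Subsingleton PUnit)

def ofShortExact {S : ShortComplex (ModuleCat.{v} R)} (hS : S.ShortExact)
    (res : ResolutionOfLength R n S.X₁) : ResolutionOfLength R (n + 1) S.X₃ where
  P | 0 => S.X₂ | i + 1 => res.P i
  d | 0 => res.ε ≫ S.f | i + 1 => res.d i
  ε := S.g
  surj := hS.moduleCat_surjective_g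
  exact₀ := by
    show Function.Exact (S.f.hom ∘ₗ res.ε.hom) S.g.hom
    rw [res.surj.comp_exact_iff_exact]
    exact (ShortComplex.ShortExact.moduleCat_exact_iff_function_exact S).1 hS.exact
  exact
    | 0 => by
      show Function.Exact (res.d 0).hom (S.f.hom ∘ₗ res.ε.hom)
      rw [hS.moduleCat_injective_f.comp_exact_iff_exact]
      exact res.exact₀
    | i + 1 => res.exact i
  bounded
    | 0, h => absurd h (Nat.not_lt_zero _)
    | i + 1, h => res.bounded i (by omega)

def tail (res : ResolutionOfLength R (n + 1) M) :
    ResolutionOfLength R n (ModuleCat.of R (LinearMap.ker res.ε.hom)) where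
  P i := res.P (i + 1)
  d i := res.d (i + 1)
  ε := ModuleCat.ofHom ((res.d 0).hom.codRestrict _ res.exact₀.apply_apply_eq_zero)
  surj := by
    rintro ⟨y, hy⟩
    obtain ⟨x, rfl⟩ := (res.exact₀ y).1 hy
    exact ⟨x, rfl⟩
  exact₀ y := Subtype.ext_iff.trans (res.exact 0 y)
  exact i := res.exact (i + 1)
  bounded i h := res.bounded (i + 1) (by omega)

end ResolutionOfLength

theorem hasProjDimLE_iff_hasProjectiveDimensionLE {n : ℕ} {M : ModuleCat.{v} R} :
    HasProjDimLE R n M ↔ HasProjectiveDimensionLE M n := by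
  induction n generalizing M with
  | zero =>
    rw [← projective_iff_hasProjectiveDimensionLE_zero, ← IsProjective.iff_projective]
    constructor
    · rintro ⟨res, hres⟩
      have := res.bounded 1 Nat.one_pos
      exact Module.Projective.of_equiv (LinearEquiv.ofBijective res.ε.hom
        ⟨ModuleCat.injective_of_exact_of_subsingleton res.exact₀, res.surj⟩)
    · intro hM
      refine ⟨.self 0 M, ?_⟩
      rintro (_ | _)
      exacts [hM, inferInstanceAs (Module.Projective R PUnit.{v + 1})]
  | succ n ih =>
    constructor
    · rintro ⟨res, hres⟩
      have := hres 0
      exact (LinearMap.shortExact_shortComplexKer res.surj).hasProjectiveDimensionLT_X₃ (n + 1)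
        (ih.1 ⟨res.tail, fun i => hres (i + 1)⟩) inferInstance
    · intro hM
      have hS := M.shortExact_projectiveShortComplex
      obtain ⟨res, hres⟩ := ih.2 (hS.hasProjectiveDimensionLT_X₁ (n + 1) inferInstance hM)
      refine ⟨.ofShortExact hS res, ?_⟩
      rintro (_ | i)
      exacts [inferInstanceAs (Module.Projective R M.projectiveShortComplex.X₂), hres i]

section Contractible

variable {V : Type*} [Category V] {ι : Type*} {c : ComplexShape ι}

lemma HomologicalComplex.exactAt_of_homotopy_id_zero [Preadditive V] [CategoryWithHomology V]
    {C : HomologicalComplex V c} (h : Homotopy (𝟙 C) 0) (i : ι) : C.ExactAt i := by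
  rw [exactAt_iff_isZero_homology, IsZero.iff_id_eq_zero, ← homologyMap_id, h.homologyMap_eq,
    homologyMap_zero]

lemma Homotopy.nullHomotopicMap_hom_eq_id [Preadditive V] {C : HomologicalComplex V c}
    (h : Homotopy (𝟙 C) 0) : nullHomotopicMap h.hom = 𝟙 C := by
  ext i
  simp [nullHomotopicMap, h.comm i]

/-- The lift of `f` along `e` is `d s g + s g d`, where `g` lifts `f` degreewise and `s` is the
contraction. -/
lemma HomologicalComplex.projective_of_homotopy_id_zero [Abelian V]
    {C : HomologicalComplex V c} (h : Homotopy (𝟙 C) 0) [∀ i, Projective (C.X i)] :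
    Projective C where
  factors f e _ := by
    refine ⟨Homotopy.nullHomotopicMap fun i j =>
      h.hom i j ≫ Projective.factorThru (f.f j) (e.f j), ?_⟩
    simp only [Homotopy.nullHomotopicMap_comp, Category.assoc, Projective.factorThru_comp]
    rw [← Homotopy.nullHomotopicMap_comp, h.nullHomotopicMap_hom_eq_id, Category.id_comp]

def CategoryTheory.Retract.homotopyIdZero [Preadditive V] {C D : HomologicalComplex V c}
    (e : Retract C D) (h : Homotopy (𝟙 D) 0) : Homotopy (𝟙 C) 0 :=
  (Homotopy.ofEq (by simp)).trans
    (((h.compLeft e.i).compRight e.r).trans (Homotopy.ofEq (by simp)))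

end Contractible

namespace HomologicalComplex

variable {ι : Type*} {c : ComplexShape ι}

@[simp]
lemma d_comp_d_apply (C : HomologicalComplex (ModuleCat.{v} R) c) (i j k : ι) (x : C.X i) :
    C.d j k (C.d i j x) = 0 := by
  rw [← ConcreteCategory.comp_apply, C.d_comp_d]
  rfl

lemma Hom.comm_apply {C D : HomologicalComplex (ModuleCat.{v} R) c} (f : C ⟶ D) (i j : ι)
    (x : C.X i) : D.d i j (f.f i x) = f.f j (C.d i j x) := by
  rw [← ConcreteCategory.comp_apply, f.comm, ConcreteCategory.comp_apply]

end HomologicalComplex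

namespace ChainComplex

open HomologicalComplex

variable {C : ChainComplex (ModuleCat.{v} R) ℤ}

lemma exactAt_iff_function_exact (C : ChainComplex (ModuleCat.{v} R) ℤ) {i j k : ℤ}
    (hij : j + 1 = i) (hjk : k + 1 = j) : C.ExactAt j ↔ Function.Exact (C.d i j) (C.d j k) := by
  rw [C.exactAt_iff' i j k (by simp [hij]) (by simp; omega),
    ShortComplex.ShortExact.moduleCat_exact_iff_function_exact]
  rfl

lemma _root_.Homotopy.d_hom_add_hom_d_apply (h : Homotopy (𝟙 C) 0) {i j k : ℤ}
    (hij : j + 1 = i) (hjk : k + 1 = j) (x : C.X j) :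
    C.d i j (h.hom j i x) + h.hom k j (C.d j k x) = x := by
  have := h.comm j
  rw [dNext_eq h.hom (show (ComplexShape.down ℤ).Rel j k from hjk),
    prevD_eq h.hom (show (ComplexShape.down ℤ).Rel i j from hij)] at this
  simpa [add_comm] using (ConcreteCategory.congr_hom this x).symm

abbrev cyclesModule (C : ChainComplex (ModuleCat.{v} R) ℤ) (m : ℤ) : ModuleCat.{v} R :=
  ModuleCat.of R (LinearMap.ker (C.d m (m - 1)).hom)

def dToCycles (C : ChainComplex (ModuleCat.{v} R) ℤ) (i j : ℤ) :
    C.X i →ₗ[R] LinearMap.ker (C.d j (j - 1)).hom :=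
  (C.d i j).hom.codRestrict _ (C.d_comp_d_apply i j (j - 1))

@[simp]
lemma dToCycles_coe (i j : ℤ) (x : C.X i) : (C.dToCycles i j x : C.X j) = C.d i j x := rfl

lemma projective_cycles_of_homotopy_id_zero (h : Homotopy (𝟙 C) 0) (m : ℤ)
    [Module.Projective R (C.X m)] : Module.Projective R (LinearMap.ker (C.d m (m - 1)).hom) := by
  refine Module.Projective.of_split (LinearMap.ker _).subtype
    (C.dToCycles (m + 1) m ∘ₗ (h.hom m (m + 1)).hom) (LinearMap.ext fun z => Subtype.ext ?_)
  simpa [z.2] using h.d_hom_add_hom_d_apply rfl (sub_add_cancel m 1) z.1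

lemma projective_X_of_homotopy_id_zero (h : Homotopy (𝟙 C) 0) (m : ℤ)
    [Module.Projective R (LinearMap.ker (C.d m (m - 1)).hom)]
    [Module.Projective R (LinearMap.ker (C.d (m - 1) (m - 1 - 1)).hom)] :
    Module.Projective R (C.X m) := by
  refine Module.Projective.of_split
    ((C.dToCycles (m + 1) m ∘ₗ (h.hom m (m + 1)).hom).prod (C.dToCycles m (m - 1)))
    ((LinearMap.ker _).subtype.coprod ((h.hom (m - 1) m).hom ∘ₗ (LinearMap.ker _).subtype))
    (LinearMap.ext fun x => ?_)
  simpa using h.d_hom_add_hom_d_apply rfl (sub_add_cancel m 1) x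

section ExactWithProjectiveCycles

variable (hC : ∀ m, C.ExactAt m)
  (hZ : ∀ m, Module.Projective R (LinearMap.ker (C.d m (m - 1)).hom))
include hC hZ

lemma exists_rightInverse_d {i j : ℤ} (hij : j + 1 = i) :
    ∃ t : LinearMap.ker (C.d j (j - 1)).hom →ₗ[R] C.X i, ∀ z, C.d i j (t z) = z := by
  have hd : Function.Surjective (C.dToCycles i j) := by
    rintro ⟨z, hz⟩
    obtain ⟨x, rfl⟩ := ((C.exactAt_iff_function_exact hij (by omega)).1 (hC j) z).1 hz
    exact ⟨x, rfl⟩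
  obtain ⟨t, ht⟩ := Module.projective_lifting_property _ LinearMap.id hd
  exact ⟨t, fun z => congr_arg Subtype.val (LinearMap.congr_fun ht z)⟩

lemma nonempty_homotopy_id_zero_of_exactAt : Nonempty (Homotopy (𝟙 C) 0) := by
  choose t ht using fun i j (hij : j + 1 = i) => exists_rightInverse_d hC hZ hij
  -- `ρ i = id - t ∘ d` projects `C_i` onto the cycles; the contraction is `t ∘ ρ`.
  let ρ (i : ℤ) : C.X i →ₗ[R] LinearMap.ker (C.d i (i - 1)).hom :=
    (LinearMap.id - t i (i - 1) (by omega) ∘ₗ C.dToCycles i (i - 1)).codRestrict _ fun x => by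
      simp [ht]
  let s (i j : ℤ) (hij : (ComplexShape.down ℤ).Rel j i) : C.X i ⟶ C.X j :=
    ModuleCat.ofHom (t j i hij ∘ₗ ρ i)
  have hs : Homotopy.nullHomotopicMap' s = 𝟙 C := by
    ext m x
    have hρ : ρ (m - 1) (C.d m (m - 1) x) = C.dToCycles m (m - 1) x := by
      have : C.dToCycles (m - 1) (m - 1 - 1) (C.d m (m - 1) x) = 0 := Subtype.ext (by simp)
      exact Subtype.ext (by simp [ρ, this])
    rw [Homotopy.nullHomotopicMap'_f (show m + 1 = m + 1 from rfl) (sub_add_cancel m 1)]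
    simp [s, hρ, ρ, ht]
  exact ⟨(Homotopy.ofEq hs.symm).trans (Homotopy.nullHomotopy' s)⟩

end ExactWithProjectiveCycles

/-- The direct sum over `m` of the disks on `F m`, each concentrated in degrees `m` and `m - 1`
with identity differential. -/
abbrev disks (F : ℤ → ModuleCat.{v} R) : ChainComplex (ModuleCat.{v} R) ℤ :=
  ChainComplex.of (fun m => ModuleCat.of R (F (m + 1) × F m))
    (fun _ => ModuleCat.ofHom ((LinearMap.snd R _ _).prod 0)) fun _ => by ext <;> simp

def disks.contraction (F : ℤ → ModuleCat.{v} R) : Homotopy (𝟙 (disks F)) 0 :=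
  let s (i j : ℤ) (hij : (ComplexShape.down ℤ).Rel j i) : (disks F).X i ⟶ (disks F).X j := by
    subst hij
    exact ModuleCat.ofHom (LinearMap.inr R _ _ ∘ₗ LinearMap.fst R _ _)
  have hs : Homotopy.nullHomotopicMap' s = 𝟙 (disks F) := by
    ext m : 2
    -- writing the degree as `k + 1` makes `s k (k + 1)` reduce
    obtain ⟨k, rfl⟩ : ∃ k, m = k + 1 := ⟨m - 1, by omega⟩
    rw [Homotopy.nullHomotopicMap'_f (show k + 1 + 1 = k + 1 + 1 from rfl)
      (show k + 1 = k + 1 from rfl)]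
    refine LinearMap.ext fun x => ?_
    simp [s]
  (Homotopy.ofEq hs.symm).trans (Homotopy.nullHomotopy' s)

def disks.desc {F : ℤ → ModuleCat.{v} R} (g : ∀ m, F m ⟶ C.X m) : disks F ⟶ C where
  f m := ModuleCat.ofHom (((C.d (m + 1) m).hom ∘ₗ (g (m + 1)).hom).coprod (g m).hom)
  comm' := by
    rintro _ j rfl
    refine ModuleCat.hom_ext (LinearMap.ext fun x => ?_)
    simp

abbrev freeDisks (C : ChainComplex (ModuleCat.{v} R) ℤ) : ChainComplex (ModuleCat.{v} R) ℤ :=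
  disks fun m => ModuleCat.of R (C.X m →₀ R)

def freeDisksπ (C : ChainComplex (ModuleCat.{v} R) ℤ) : C.freeDisks ⟶ C :=
  disks.desc fun _ => ModuleCat.ofHom (Finsupp.linearCombination R id)

lemma freeDisksπ_f_surjective (m : ℤ) : Function.Surjective (C.freeDisksπ.f m) :=
  fun x => ⟨(0, Finsupp.single x 1), by simp [freeDisksπ, disks.desc]⟩

instance : Epi C.freeDisksπ :=
  epi_of_epi_f _ fun m => (ModuleCat.epi_iff_surjective _).2 (freeDisksπ_f_surjective m)

instance (m : ℤ) : Projective (C.freeDisks.X m) :=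
  inferInstanceAs (Projective (ModuleCat.of R ((C.X (m + 1) →₀ R) × (C.X m →₀ R))))

instance : Projective C.freeDisks :=
  projective_of_homotopy_id_zero (disks.contraction _)

theorem projective_iff_nonempty_homotopy_id_zero :
    Projective C ↔ Nonempty (Homotopy (𝟙 C) 0) ∧ ∀ m, Projective (C.X m) := by
  constructor
  · intro hC
    let e : Retract C C.freeDisks :=
      ⟨Projective.factorThru (𝟙 C) C.freeDisksπ, C.freeDisksπ, by simp⟩
    exact ⟨⟨e.homotopyIdZero (disks.contraction _)⟩, fun m => (e.map (eval _ _ m)).projective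
      (p := inferInstanceAs (Projective (C.freeDisks.X m)))⟩
  · rintro ⟨⟨h⟩, hX⟩
    exact projective_of_homotopy_id_zero h

theorem projective_iff_exactAt_and_projective_cycles :
    Projective C ↔
      (∀ m, C.ExactAt m) ∧ ∀ m, Module.Projective R (LinearMap.ker (C.d m (m - 1)).hom) := by
  rw [projective_iff_nonempty_homotopy_id_zero]
  constructor
  · rintro ⟨⟨h⟩, hX⟩
    exact ⟨exactAt_of_homotopy_id_zero h, fun m => projective_cycles_of_homotopy_id_zero h m⟩
  · rintro ⟨hC, hZ⟩
    obtain ⟨h⟩ := nonempty_homotopy_id_zero_of_exactAt hC hZ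
    exact ⟨⟨h⟩, fun m => have := projective_X_of_homotopy_id_zero h m; inferInstance⟩

section Kernel

variable {P X : ChainComplex (ModuleCat.{v} R) ℤ} (φ : P ⟶ X)

abbrev kerComplex : ChainComplex (ModuleCat.{v} R) ℤ where
  X m := ModuleCat.of R (LinearMap.ker (φ.f m).hom)
  d i j := ModuleCat.ofHom ((P.d i j).hom.restrict fun x (hx : φ.f i x = 0) => by
    simp [← Hom.comm_apply, hx])
  shape i j h := by ext x; simp [P.shape i j h]
  d_comp_d' i j k _ _ := by ext x; exact P.d_comp_d_apply i j k x.1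

def kerComplex.ι : kerComplex φ ⟶ P where
  f m := ModuleCat.ofHom (LinearMap.ker _).subtype
  comm' i j _ := by ext x; rfl

def kerComplex.lift {Q : ChainComplex (ModuleCat.{v} R) ℤ} (ψ : Q ⟶ P) (hψ : ψ ≫ φ = 0) :
    Q ⟶ kerComplex φ where
  f m := ModuleCat.ofHom ((ψ.f m).hom.codRestrict _ fun x => by
    simpa using congr_arg (fun f => (f.f m).hom x) hψ)
  comm' i j _ := by ext x; exact ψ.comm_apply i j x

def cyclesMap {C D : ChainComplex (ModuleCat.{v} R) ℤ} (ψ : C ⟶ D) (m : ℤ) :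
    C.cyclesModule m ⟶ D.cyclesModule m :=
  ModuleCat.ofHom ((ψ.f m).hom.restrict fun x (hx : C.d m (m - 1) x = 0) => by
    simp [Hom.comm_apply, hx])

def kerComplexCycles (m : ℤ) : ShortComplex (ModuleCat.{v} R) :=
  ShortComplex.mk (cyclesMap (kerComplex.ι φ) m) (cyclesMap φ m) (by ext x; exact x.1.2)

variable {φ} (hφ : ∀ m, Function.Surjective (φ.f m))
include hφ

lemma kerComplex_exactAt (hP : ∀ m, P.ExactAt m) (hX : ∀ m, X.ExactAt m) (m : ℤ) :
    (kerComplex φ).ExactAt m := by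
  rw [exactAt_iff_function_exact _ (i := m + 1) rfl (sub_add_cancel m 1)]
  refine fun y => ⟨fun hy => ?_, ?_⟩
  · obtain ⟨a, ha⟩ := ((P.exactAt_iff_function_exact (i := m + 1) rfl (sub_add_cancel m 1)).1
      (hP m) y.1).1 (congr_arg Subtype.val hy)
    have : X.d (m + 1) m (φ.f (m + 1) a) = 0 := by rw [Hom.comm_apply, ha]; exact y.2
    obtain ⟨b, hb⟩ :=
      ((X.exactAt_iff_function_exact (i := m + 1 + 1) rfl rfl).1 (hX (m + 1)) _).1 this
    obtain ⟨c, rfl⟩ := hφ _ b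
    refine ⟨⟨a - P.d (m + 1 + 1) (m + 1) c, ?_⟩, Subtype.ext ?_⟩
    · simp [← Hom.comm_apply, hb]
    · show P.d (m + 1) m (a - P.d (m + 1 + 1) (m + 1) c) = y.1
      simp [ha]
  · rintro ⟨x, rfl⟩
    exact (kerComplex φ).d_comp_d_apply _ _ _ x

lemma cyclesMap_surjective (hK : ∀ m, (kerComplex φ).ExactAt m) (m : ℤ) :
    Function.Surjective (cyclesMap φ m) := by
  rintro ⟨x, hx⟩
  obtain ⟨a, rfl⟩ := hφ m x
  have hda : φ.f (m - 1) (P.d m (m - 1) a) = 0 := by rw [← Hom.comm_apply]; exact hx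
  obtain ⟨k, hk⟩ := (((kerComplex φ).exactAt_iff_function_exact (i := m) (sub_add_cancel m 1)
    (sub_add_cancel _ 1)).1 (hK (m - 1)) ⟨_, hda⟩).1 (Subtype.ext (P.d_comp_d_apply _ _ _ a))
  refine ⟨⟨a - k.1, ?_⟩, Subtype.ext ?_⟩
  · show P.d m (m - 1) (a - k.1) = 0
    rw [map_sub, sub_eq_zero]
    exact (congr_arg Subtype.val hk).symm
  · show φ.f m (a - k.1) = φ.f m a
    rw [map_sub, show φ.f m k.1 = 0 from k.2, sub_zero]

lemma exactAt_of_kerComplex (hP : ∀ m, P.ExactAt m) (hK : ∀ m, (kerComplex φ).ExactAt m)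
    (m : ℤ) : X.ExactAt m := by
  rw [X.exactAt_iff_function_exact (i := m + 1) rfl (sub_add_cancel m 1)]
  refine fun x => ⟨fun hx => ?_, ?_⟩
  · obtain ⟨⟨a, ha⟩, hax⟩ := cyclesMap_surjective hφ hK m ⟨x, hx⟩
    obtain ⟨p, rfl⟩ := ((P.exactAt_iff_function_exact (i := m + 1) rfl (sub_add_cancel m 1)).1
      (hP m) a).1 ha
    exact ⟨φ.f (m + 1) p, by rw [Hom.comm_apply]; exact congr_arg Subtype.val hax⟩
  · rintro ⟨y, rfl⟩
    exact X.d_comp_d_apply _ _ _ y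

lemma kerComplexCycles_shortExact (hK : ∀ m, (kerComplex φ).ExactAt m) (m : ℤ) :
    (kerComplexCycles φ m).ShortExact :=
  ModuleCat.shortComplex_shortExact _
    (fun y => ⟨fun hy => ⟨⟨⟨y.1, congr_arg Subtype.val hy⟩, Subtype.ext y.2⟩, rfl⟩,
      by rintro ⟨z, rfl⟩; exact Subtype.ext z.1.2⟩)
    (fun a b h => Subtype.ext (Subtype.ext (congr_arg Subtype.val h :)))
    (cyclesMap_surjective hφ hK m)

theorem exactAt_and_hasProjectiveDimensionLE_cycles_succ_iff [Projective P] (n : ℕ) :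
    ((∀ m, X.ExactAt m) ∧ ∀ m, HasProjectiveDimensionLE (X.cyclesModule m) (n + 1)) ↔
      (∀ m, (kerComplex φ).ExactAt m) ∧
        ∀ m, HasProjectiveDimensionLE ((kerComplex φ).cyclesModule m) n := by
  obtain ⟨hP, hZ⟩ := projective_iff_exactAt_and_projective_cycles.1 ‹Projective P›
  have hZ' (m : ℤ) (k : ℕ) : HasProjectiveDimensionLT (P.cyclesModule m) (k + 1) :=
    have := hZ m
    inferInstance
  constructor
  · rintro ⟨hX, hXZ⟩
    have hK := kerComplex_exactAt hφ hP hX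
    exact ⟨hK, fun m => (kerComplexCycles_shortExact hφ hK m).hasProjectiveDimensionLT_X₁
      (n + 1) (hZ' m n) (hXZ m)⟩
  · rintro ⟨hK, hKZ⟩
    exact ⟨exactAt_of_kerComplex hφ hP hK, fun m => (kerComplexCycles_shortExact hφ hK m)
      |>.hasProjectiveDimensionLT_X₃ (n + 1) (hKZ m) (hZ' m (n + 1))⟩

end Kernel

end ChainComplex

namespace ComplexSequenceTo

open ChainComplex

variable {n : ℕ} {X : ChainComplex (ModuleCat.{v} R) ℤ}

instance (m : ℤ) :
    Subsingleton ((HomologicalComplex.zero : ChainComplex (ModuleCat.{v} R) ℤ).X m) :=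
  ModuleCat.subsingleton_of_isZero (isZero_zero _)

def self (X : ChainComplex (ModuleCat.{v} R) ℤ) : ComplexSequenceTo R 0 X where
  A | 0 => X | _ + 1 => HomologicalComplex.zero
  d _ := 0
  ε := 𝟙 X
  surj _ := Function.surjective_id
  exact₀ m y := by simp [eq_comm]
  exact _ m y := by simp [Subsingleton.elim y 0]
  bounded
    | 0, h, _ => absurd h (Nat.lt_irrefl 0)
    | _ + 1, _, m => inferInstanceAs
      (Subsingleton ((HomologicalComplex.zero : ChainComplex (ModuleCat.{v} R) ℤ).X m))

def cons {P : ChainComplex (ModuleCat.{v} R) ℤ} (φ : P ⟶ X)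
    (hφ : ∀ m, Function.Surjective (φ.f m)) (S : ComplexSequenceTo R n (kerComplex φ)) :
    ComplexSequenceTo R (n + 1) X where
  A | 0 => P | i + 1 => S.A i
  d | 0 => S.ε ≫ kerComplex.ι φ | i + 1 => S.d i
  ε := φ
  surj := hφ
  exact₀ m y := by
    refine ⟨fun hy => ?_, ?_⟩
    · obtain ⟨z, hz⟩ := S.surj m ⟨y, hy⟩
      exact ⟨z, congr_arg Subtype.val hz⟩
    · rintro ⟨z, rfl⟩
      exact (S.ε.f m z).2
  exact
    | 0, m => fun y => Subtype.ext_iff.symm.trans (S.exact₀ m y)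
    | i + 1, m => S.exact i m
  bounded
    | 0, h => absurd h (Nat.not_lt_zero _)
    | i + 1, h => S.bounded i (by omega)

def tail (S : ComplexSequenceTo R (n + 1) X) : ComplexSequenceTo R n (kerComplex S.ε) where
  A i := S.A (i + 1)
  d i := S.d (i + 1)
  ε := kerComplex.lift S.ε (S.d 0) (by ext m x; exact (S.exact₀ m _).2 ⟨x, rfl⟩)
  surj m := by
    rintro ⟨y, hy⟩
    obtain ⟨x, rfl⟩ := (S.exact₀ m y).1 hy
    exact ⟨x, rfl⟩
  exact₀ m y := Subtype.ext_iff.trans (S.exact 0 m y)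
  exact i := S.exact (i + 1)
  bounded i h := S.bounded (i + 1) (by omega)

theorem exists_projective_zero_iff :
    (∃ S : ComplexSequenceTo R 0 X, ∀ i, Projective (S.A i)) ↔ Projective X := by
  constructor
  · rintro ⟨S, hS⟩
    have := S.bounded 1 Nat.one_pos
    have (m : ℤ) : IsIso (S.ε.f m) := (ConcreteCategory.isIso_iff_bijective _).2
      ⟨ModuleCat.injective_of_exact_of_subsingleton (S.exact₀ m), S.surj m⟩
    have := HomologicalComplex.Hom.isIso_of_components S.ε
    exact Projective.of_iso (asIso S.ε) (hS 0)
  · intro hX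
    refine ⟨self X, ?_⟩
    rintro (_ | _)
    exacts [hX, HomologicalComplex.isZero_zero.projective]

end ComplexSequenceTo

end

/-- A chain complex `X` of `R`-modules is exact with every cycle module `Z_m(X)` of
projective dimension at most `n` if and only if `X` has projective dimension at most `n`
in `Ch(R)`: there is an exact sequence `0 → P^n → ⋯ → P^0 → X → 0` of chain complexes
with each `P^i` a projective object of `Ch(R)`. -/
theorem exact_with_cycles_projDimLE_iff_complex_projDimLE (R : Type) [Ring R] (n : ℕ)
    (X : ChainComplex (ModuleCat R) ℤ) :
    ((∀ m : ℤ, X.ExactAt m) ∧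
      ∀ m : ℤ, HasProjDimLE R n (ModuleCat.of R (LinearMap.ker (X.d m (m - 1)).hom))) ↔
    ∃ S : ComplexSequenceTo R n X, ∀ i : ℕ, Projective (S.A i) := by
  simp only [hasProjDimLE_iff_hasProjectiveDimensionLE]
  induction n generalizing X with
  | zero =>
    simp only [← projective_iff_hasProjectiveDimensionLE_zero, ← IsProjective.iff_projective]
    rw [ComplexSequenceTo.exists_projective_zero_iff,
      ChainComplex.projective_iff_exactAt_and_projective_cycles]
  | succ n ih =>
    constructor
    · intro hX
      have hK := (ChainComplex.exactAt_and_hasProjectiveDimensionLE_cycles_succ_iff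
        ChainComplex.freeDisksπ_f_surjective n).1 hX
      obtain ⟨S, hS⟩ := (ih _).1 hK
      refine ⟨.cons _ ChainComplex.freeDisksπ_f_surjective S, ?_⟩
      rintro (_ | i)
      exacts [inferInstanceAs (Projective X.freeDisks), hS i]
    · rintro ⟨S, hS⟩
      have := hS 0
      exact (ChainComplex.exactAt_and_hasProjectiveDimensionLE_cycles_succ_iff S.surj n).2
        ((ih _).2 ⟨S.tail, fun i => hS (i + 1)⟩)
end

section
/- Let C be an abelian category with enough projectives and enough injectives, and let (A, B) be a cotorsion pair in C. Then (A, B) has enough projectives if and only if it has enough injectives (Salce's Lemma). -/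
/-!
`Ext¹(A, -)` kills injectives and, by the long exact `Ext` sequence, is closed under extensions;
hence `ℬ` contains the injectives and is closed under extensions. Given `X`, embed it in an
injective `J` and take `0 ⟶ B ⟶ A ⟶ J/X ⟶ 0` with `A ∈ 𝒜`, `B ∈ ℬ`. The pullback `P` of
`A ⟶ J/X ⟵ J` sits in `0 ⟶ X ⟶ P ⟶ A ⟶ 0` and in `0 ⟶ B ⟶ P ⟶ J ⟶ 0`, so `P ∈ ℬ`.
The converse is the same argument in `Cᵒᵖ`, where `(ℬ, 𝒜)` is again a cotorsion pair
and the two approximation properties are exchanged.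
-/

universe v u

open CategoryTheory Limits

variable {C : Type u} [Category.{v} C] [Abelian C]

/-- `Ext¹(X, Y) = 0`, expressed by the property that every short exact sequence
`0 → Y → E → X → 0` splits. -/
def Ext1Vanish (X Y : C) : Prop :=
  ∀ (E : C) (i : Y ⟶ E) (p : E ⟶ X) (w : i ≫ p = 0),
    (ShortComplex.mk i p w).ShortExact → ∃ r : E ⟶ Y, i ≫ r = 𝟙 Y

/-- `(𝒜, ℬ)` is a cotorsion pair: `𝒜 = ⊥ℬ` and `ℬ = 𝒜⊥` with respect to `Ext¹`. -/
def IsCotorsionPair (𝒜 ℬ : C → Prop) : Prop :=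
  (∀ X : C, 𝒜 X ↔ ∀ Y : C, ℬ Y → Ext1Vanish X Y) ∧
  (∀ Y : C, ℬ Y ↔ ∀ X : C, 𝒜 X → Ext1Vanish X Y)

/-- The pair `(𝒜, ℬ)` has enough projectives: every object `X` fits in a short exact
sequence `0 → B → A → X → 0` with `A ∈ 𝒜` and `B ∈ ℬ`. -/
def PairHasEnoughProjectives (𝒜 ℬ : C → Prop) : Prop :=
  ∀ X : C, ∃ (B A : C) (i : B ⟶ A) (p : A ⟶ X) (w : i ≫ p = 0),
    (ShortComplex.mk i p w).ShortExact ∧ 𝒜 A ∧ ℬ B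

/-- The pair `(𝒜, ℬ)` has enough injectives: every object `X` fits in a short exact
sequence `0 → X → B' → A' → 0` with `A' ∈ 𝒜` and `B' ∈ ℬ`. -/
def PairHasEnoughInjectives (𝒜 ℬ : C → Prop) : Prop :=
  ∀ X : C, ∃ (B' A' : C) (i : X ⟶ B') (p : B' ⟶ A') (w : i ≫ p = 0),
    (ShortComplex.mk i p w).ShortExact ∧ 𝒜 A' ∧ ℬ B'

open CategoryTheory Limits Abelian Opposite

universe w

namespace CategoryTheory

lemma ShortComplex.ShortExact.exists_section_of_retraction {S : ShortComplex C}
    (hS : S.ShortExact) {r : S.X₂ ⟶ S.X₁} (hr : S.f ≫ r = 𝟙 S.X₁) :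
    ∃ s : S.X₃ ⟶ S.X₂, s ≫ S.g = 𝟙 S.X₃ :=
  ⟨_, (ShortComplex.Splitting.ofExactOfRetraction S hS.exact r hr hS.epi_g).s_g⟩

lemma ShortComplex.ShortExact.exists_retraction_of_section {S : ShortComplex C}
    (hS : S.ShortExact) {s : S.X₃ ⟶ S.X₂} (hs : s ≫ S.g = 𝟙 S.X₃) :
    ∃ r : S.X₂ ⟶ S.X₁, S.f ≫ r = 𝟙 S.X₁ :=
  ⟨_, (ShortComplex.Splitting.ofExactOfSection S hS.exact s hs hS.mono_f).f_r⟩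

lemma Ext1Vanish.exists_section {X Y E : C} (h : Ext1Vanish X Y) {i : Y ⟶ E} {p : E ⟶ X}
    {w : i ≫ p = 0} (hS : (ShortComplex.mk i p w).ShortExact) :
    ∃ s : X ⟶ E, s ≫ p = 𝟙 X :=
  have ⟨_, hr⟩ := h E i p w hS
  hS.exists_section_of_retraction hr

lemma IsPullback.shortExact {P A I Q X : C} {fst : P ⟶ A} {snd : P ⟶ I} {v : A ⟶ Q}
    {g : I ⟶ Q} (sq : IsPullback fst snd v g) {f : X ⟶ I} {w : f ≫ g = 0}
    (hS : (ShortComplex.mk f g w).ShortExact) :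
    (ShortComplex.mk (sq.lift 0 f (by simp [w])) fst (sq.lift_fst _ _ _)).ShortExact := by
  have := hS.mono_f
  have := hS.epi_g
  have : Mono (sq.lift 0 f (by simp [w])) := mono_of_mono_fac (sq.lift_snd _ _ _)
  have : Epi fst := epi_fst_of_isLimit v g sq.isLimit
  refine .mk' (ShortComplex.exact_of_f_is_kernel _ ?_) inferInstance inferInstance
  refine KernelFork.IsLimit.ofι' _ _ fun {T} k hk => ⟨hS.exact.lift (k ≫ snd)
    (by rw [Category.assoc, ← sq.w, reassoc_of% hk, zero_comp]), ?_⟩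
  apply sq.hom_ext
  · simp [hk]
  · simpa using hS.exact.lift_f _ _

section Ext

variable [HasExt.{w} C]

lemma ext1Vanish_of_subsingleton_ext {X Y : C} (hXY : Subsingleton (Ext.{w} X Y 1)) :
    Ext1Vanish X Y := by
  intro E i p w hS
  obtain ⟨r, hr⟩ := Ext.contravariant_sequence_exact₁ hS Y (Ext.mk₀ (𝟙 Y)) (add_zero 1)
    (hXY.elim _ _)
  refine ⟨Ext.homEquiv₀ r, (Ext.mk₀_bijective _ _).1 ?_⟩
  rwa [← Ext.mk₀_comp_mk₀, Ext.mk₀_homEquiv₀_apply]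

lemma Ext1Vanish.subsingleton_ext [EnoughInjectives C] {X Y : C} (h : Ext1Vanish X Y) :
    Subsingleton (Ext.{w} X Y 1) := by
  let ip := (EnoughInjectives.presentation Y).some
  have hS := ip.shortExact_shortComplex
  refine subsingleton_of_forall_eq 0 fun x => ?_
  obtain ⟨g, rfl⟩ :=
    Ext.covariant_sequence_exact₁ X hS x (Ext.eq_zero_of_injective _) (zero_add 1)
  -- `x` is the class of the pullback of `0 ⟶ Y ⟶ J ⟶ J/Y ⟶ 0` along `g`, which splits;
  -- a splitting lifts `g` to `J`, and `J ⟶ J/Y` kills the extension class.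
  obtain ⟨s, hs⟩ := h.exists_section
    ((IsPullback.of_hasPullback (Ext.homEquiv₀ g) ip.shortComplex.g).shortExact hS)
  have hlift : (s ≫ pullback.snd _ _) ≫ ip.shortComplex.g = Ext.homEquiv₀ g := by
    rw [Category.assoc, ← pullback.condition, reassoc_of% hs]
  rw [← Ext.mk₀_homEquiv₀_apply g, ← hlift, ← Ext.mk₀_comp_mk₀,
    Ext.comp_assoc_of_second_deg_zero, hS.comp_extClass, Ext.comp_zero]

lemma ShortComplex.ShortExact.subsingleton_ext_X₂ {S : ShortComplex C} (hS : S.ShortExact)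
    (X : C) (n : ℕ) [Subsingleton (Ext.{w} X S.X₁ n)] [Subsingleton (Ext.{w} X S.X₃ n)] :
    Subsingleton (Ext.{w} X S.X₂ n) := by
  refine subsingleton_of_forall_eq 0 fun x => ?_
  obtain ⟨y, rfl⟩ := Ext.covariant_sequence_exact₂ X hS x (Subsingleton.elim _ _)
  rw [Subsingleton.elim y 0, Ext.zero_comp]

lemma ext1Vanish_iff_subsingleton_ext [EnoughInjectives C] {X Y : C} :
    Ext1Vanish X Y ↔ Subsingleton (Ext.{w} X Y 1) :=
  ⟨Ext1Vanish.subsingleton_ext, ext1Vanish_of_subsingleton_ext⟩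

end Ext

lemma ext1Vanish_op_iff {X Y : Cᵒᵖ} : Ext1Vanish X Y ↔ Ext1Vanish Y.unop X.unop := by
  constructor
  · intro h E i p w hS
    obtain ⟨r, hr⟩ := h (op E) p.op i.op (by rw [← op_comp, w, op_zero]) hS.op
    exact hS.exists_retraction_of_section (s := r.unop) (Quiver.Hom.op_inj hr)
  · intro h E i p w hS
    obtain ⟨s, hs⟩ := h.exists_section (w := by rw [← unop_comp, w, unop_zero]) hS.unop
    exact ⟨s.op, Quiver.Hom.unop_inj hs⟩

namespace IsCotorsionPair

variable {𝒜 ℬ : C → Prop} [EnoughInjectives C]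

lemma right_iff_subsingleton_ext [HasExt.{w} C] (h : IsCotorsionPair 𝒜 ℬ) (Y : C) :
    ℬ Y ↔ ∀ X, 𝒜 X → Subsingleton (Ext.{w} X Y 1) :=
  (h.2 Y).trans (forall₂_congr fun _ _ => ext1Vanish_iff_subsingleton_ext)

lemma right_of_injective (h : IsCotorsionPair 𝒜 ℬ) (I : C) [Injective I] : ℬ I :=
  have := hasExt_of_enoughInjectives.{v} C
  (h.right_iff_subsingleton_ext I).2 fun X _ => Ext.subsingleton_of_injective X I 0

lemma right_of_shortExact (h : IsCotorsionPair 𝒜 ℬ) {S : ShortComplex C} (hS : S.ShortExact)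
    (h₁ : ℬ S.X₁) (h₃ : ℬ S.X₃) : ℬ S.X₂ := by
  have := hasExt_of_enoughInjectives.{v} C
  rw [h.right_iff_subsingleton_ext.{v}] at h₁ h₃ ⊢
  exact fun X hX => have := h₁ X hX; have := h₃ X hX; hS.subsingleton_ext_X₂ X 1

theorem pairHasEnoughInjectives_of_pairHasEnoughProjectives (h : IsCotorsionPair 𝒜 ℬ)
    (hp : PairHasEnoughProjectives 𝒜 ℬ) : PairHasEnoughInjectives 𝒜 ℬ := by
  intro X
  let ip := (EnoughInjectives.presentation X).some
  have := ip.injective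
  obtain ⟨B, A, u, v, w, huv, hA, hB⟩ := hp (cokernel ip.f)
  have sq := IsPullback.of_hasPullback v ip.shortComplex.g
  exact ⟨_, A, _, _, _, sq.shortExact ip.shortExact_shortComplex, hA,
    h.right_of_shortExact (sq.flip.shortExact huv) hB (h.right_of_injective ip.J)⟩

end IsCotorsionPair

section Duality

variable {𝒜 ℬ : C → Prop}

lemma IsCotorsionPair.op (h : IsCotorsionPair 𝒜 ℬ) :
    IsCotorsionPair (fun X : Cᵒᵖ => ℬ X.unop) (fun Y : Cᵒᵖ => 𝒜 Y.unop) :=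
  ⟨fun X => (h.2 X.unop).trans ⟨fun hX _ hY => ext1Vanish_op_iff.2 (hX _ hY),
      fun hX A hA => ext1Vanish_op_iff.1 (hX (Opposite.op A) hA)⟩,
    fun Y => (h.1 Y.unop).trans ⟨fun hY _ hX => ext1Vanish_op_iff.2 (hY _ hX),
      fun hY B hB => ext1Vanish_op_iff.1 (hY (Opposite.op B) hB)⟩⟩

lemma PairHasEnoughInjectives.op (h : PairHasEnoughInjectives 𝒜 ℬ) :
    PairHasEnoughProjectives (fun X : Cᵒᵖ => ℬ X.unop) (fun Y : Cᵒᵖ => 𝒜 Y.unop) := fun X =>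
  have ⟨B', A', i, p, w, hS, hA, hB⟩ := h X.unop
  ⟨Opposite.op A', Opposite.op B', p.op, i.op, by rw [← op_comp, w, op_zero], hS.op, hB, hA⟩

lemma PairHasEnoughInjectives.unop
    (h : PairHasEnoughInjectives (fun X : Cᵒᵖ => ℬ X.unop) (fun Y : Cᵒᵖ => 𝒜 Y.unop)) :
    PairHasEnoughProjectives 𝒜 ℬ := fun X =>
  have ⟨B', A', i, p, w, hS, hA, hB⟩ := h (Opposite.op X)
  ⟨A'.unop, B'.unop, p.unop, i.unop, by rw [← unop_comp, w, unop_zero], hS.unop, hB, hA⟩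

end Duality

end CategoryTheory

/-- Salce's Lemma: in an abelian category with enough projectives and enough injectives,
a cotorsion pair `(𝒜, ℬ)` has enough projectives if and only if it has enough
injectives. -/
theorem salce_lemma {C : Type u} [Category.{v} C] [Abelian C]
    [EnoughProjectives C] [EnoughInjectives C] (𝒜 ℬ : C → Prop)
    (h : IsCotorsionPair 𝒜 ℬ) :
    PairHasEnoughProjectives 𝒜 ℬ ↔ PairHasEnoughInjectives 𝒜 ℬ :=
  ⟨h.pairHasEnoughInjectives_of_pairHasEnoughProjectives,
    fun hi => (h.op.pairHasEnoughInjectives_of_pairHasEnoughProjectives hi.op).unop⟩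
end

section
/- Let C be an abelian category with enough projectives and injectives and (A, B) a cotorsion pair in C. Then A is resolving (closed under kernels of epimorphisms between objects of A) if and only if B is coresolving (closed under cokernels of monomorphisms between objects of B). -/
/-!
Dimension shifting: if `0 → K → P → A → 0` is exact with `P` projective, then `Ext¹(A, Y) = 0` as
soon as every map `K ⟶ Y` extends to `P`. Let `𝒜` be resolving, `0 → B'' → B → B' → 0` exact with
`B'', B ∈ ℬ`, and `A ∈ 𝒜`. Then `K ∈ 𝒜`, so a map `K ⟶ B'` lifts to `B` because `Ext¹(K, B'') = 0`,
and the lift extends to `P` because `Ext¹(A, B) = 0`; hence `Ext¹(A, B') = 0` and `B' ∈ ℬ`. The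
converse is the dual argument with an injective copresentation `0 → B → I → Q → 0` of `B ∈ ℬ`.
Lifting and extending against a vanishing `Ext¹` come from splitting the pulled-back, resp.
pushed-out, sequence.
-/

universe v u

open CategoryTheory Limits

variable {C : Type u} [Category.{v} C] [Abelian C]

/-- `𝒜` is closed under kernels of epimorphisms between objects of `𝒜`: for every short
exact sequence `0 → A'' → A → A' → 0` with `A, A' ∈ 𝒜` one has `A'' ∈ 𝒜`. -/
def ClassResolving (𝒜 : C → Prop) : Prop :=
  ∀ (A'' A A' : C) (i : A'' ⟶ A) (p : A ⟶ A') (w : i ≫ p = 0),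
    (ShortComplex.mk i p w).ShortExact → 𝒜 A → 𝒜 A' → 𝒜 A''

/-- `ℬ` is closed under cokernels of monomorphisms between objects of `ℬ`: for every
short exact sequence `0 → B'' → B → B' → 0` with `B'', B ∈ ℬ` one has `B' ∈ ℬ`. -/
def ClassCoresolving (ℬ : C → Prop) : Prop :=
  ∀ (B'' B B' : C) (i : B'' ⟶ B) (p : B ⟶ B') (w : i ≫ p = 0),
    (ShortComplex.mk i p w).ShortExact → ℬ B'' → ℬ B → ℬ B'

lemma ext1Vanish_of_forall_section {X Y : C}
    (h : ∀ (E : C) (i : Y ⟶ E) (p : E ⟶ X) (w : i ≫ p = 0),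
      (ShortComplex.mk i p w).ShortExact → ∃ s : X ⟶ E, s ≫ p = 𝟙 X) :
    Ext1Vanish X Y := fun E i p w hS =>
  have ⟨s, hs⟩ := h E i p w hS
  ⟨_, (ShortComplex.Splitting.ofExactOfSection _ hS.exact s hs hS.mono_f).f_r⟩

lemma ext1Vanish_of_projective (X Y : C) [Projective X] : Ext1Vanish X Y :=
  ext1Vanish_of_forall_section fun _ _ p _ hS =>
    have := hS.epi_g
    ⟨Projective.factorThru (𝟙 X) p, Projective.factorThru_comp _ _⟩

lemma ext1Vanish_of_injective (X Y : C) [Injective Y] : Ext1Vanish X Y := fun _ i _ _ hS =>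
  have := hS.mono_f
  ⟨Injective.factorThru (𝟙 Y) i, Injective.comp_factorThru _ _⟩

lemma shortExact_pullback {S : ShortComplex C} (hS : S.ShortExact) {K : C} (f : K ⟶ S.X₃) :
    (ShortComplex.mk (pullback.lift S.f 0 (by simp)) (pullback.snd S.g f)
      (pullback.lift_snd _ _ _)).ShortExact := by
  have := hS.mono_f
  have := hS.epi_g
  have hmono : Mono (pullback.lift S.f 0 (by simp) : S.X₁ ⟶ pullback S.g f) :=
    mono_of_mono_fac (pullback.lift_fst _ _ _)
  refine .mk' (ShortComplex.exact_of_f_is_kernel _ (KernelFork.IsLimit.ofι' _ _ fun t ht => ?_))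
    hmono inferInstance
  refine ⟨hS.exact.lift (t ≫ pullback.fst _ _) (by simp [pullback.condition, reassoc_of% ht]), ?_⟩
  apply pullback.hom_ext <;>
    simp only [Category.assoc, pullback.lift_fst, pullback.lift_snd, ShortComplex.Exact.lift_f,
      comp_zero, ht]

lemma shortExact_pushout {S : ShortComplex C} (hS : S.ShortExact) {B : C} (g : S.X₁ ⟶ B) :
    (ShortComplex.mk (pushout.inr S.f g) (pushout.desc S.g 0 (by simp))
      (pushout.inr_desc _ _ _)).ShortExact := by
  have := hS.mono_f
  have := hS.epi_g
  have hepi : Epi (pushout.desc S.g 0 (by simp) : pushout S.f g ⟶ S.X₃) :=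
    epi_of_epi_fac (pushout.inl_desc _ _ _)
  refine .mk' (ShortComplex.exact_of_g_is_cokernel _
    (CokernelCofork.IsColimit.ofπ' _ _ fun t ht => ?_)) inferInstance hepi
  refine ⟨hS.exact.desc (pushout.inl _ _ ≫ t) (by simpa [pushout.condition_assoc] using g ≫= ht),
    ?_⟩
  apply pushout.hom_ext <;>
    simp only [pushout.inl_desc_assoc, pushout.inr_desc_assoc, ShortComplex.Exact.g_desc,
      zero_comp, ht]

lemma exists_lift_of_ext1Vanish {S : ShortComplex C} (hS : S.ShortExact) {K : C}
    (f : K ⟶ S.X₃) (hK : Ext1Vanish K S.X₁) : ∃ g : K ⟶ S.X₂, g ≫ S.g = f := by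
  have hS' := shortExact_pullback hS f
  obtain ⟨r, hr⟩ := hK _ _ _ _ hS'
  let σ := ShortComplex.Splitting.ofExactOfRetraction _ hS'.exact r hr hS'.epi_g
  exact ⟨σ.s ≫ pullback.fst _ _, by
    rw [Category.assoc, pullback.condition, ← Category.assoc, σ.s_g, Category.id_comp]⟩

lemma exists_extension_of_ext1Vanish {S : ShortComplex C} (hS : S.ShortExact) {B : C}
    (g : S.X₁ ⟶ B) (hB : Ext1Vanish S.X₃ B) : ∃ G : S.X₂ ⟶ B, S.f ≫ G = g := by
  obtain ⟨r, hr⟩ := hB _ _ _ _ (shortExact_pushout hS g)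
  exact ⟨pushout.inl _ _ ≫ r, by
    rw [← Category.assoc, pushout.condition, Category.assoc, hr, Category.comp_id]⟩

lemma ext1Vanish_of_forall_extension {S : ShortComplex C} (hS : S.ShortExact) [Projective S.X₂]
    {Y : C} (h : ∀ f : S.X₁ ⟶ Y, ∃ F : S.X₂ ⟶ Y, S.f ≫ F = f) : Ext1Vanish S.X₃ Y := by
  refine ext1Vanish_of_forall_section fun E i p w hE => ?_
  have := hS.epi_g
  have := hE.mono_f
  have := hE.epi_g
  let h₀ : S.X₂ ⟶ E := Projective.factorThru S.g p
  have hh₀ : h₀ ≫ p = S.g := Projective.factorThru_comp _ _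
  obtain ⟨F, hF⟩ := h (hE.exact.lift (S.f ≫ h₀) (by simp [hh₀]))
  have hd : S.f ≫ (h₀ - F ≫ i) = 0 := by
    rw [Preadditive.comp_sub, ← Category.assoc, hF, hE.exact.lift_f, sub_self]
  refine ⟨hS.exact.desc _ hd, ?_⟩
  rw [← cancel_epi S.g, ← Category.assoc, hS.exact.g_desc, Preadditive.sub_comp, hh₀,
    Category.assoc, w, comp_zero, sub_zero, Category.comp_id]

lemma ext1Vanish_of_forall_lift {S : ShortComplex C} (hS : S.ShortExact) [Injective S.X₂]
    {X : C} (h : ∀ f : X ⟶ S.X₃, ∃ F : X ⟶ S.X₂, F ≫ S.g = f) : Ext1Vanish X S.X₁ := by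
  intro E i p w hE
  have := hS.mono_f
  have := hE.mono_f
  have := hE.epi_g
  let h₀ : E ⟶ S.X₂ := Injective.factorThru S.f i
  have hh₀ : i ≫ h₀ = S.f := Injective.comp_factorThru _ _
  obtain ⟨F, hF⟩ := h (hE.exact.desc (h₀ ≫ S.g) (by simp [reassoc_of% hh₀]))
  have hd : (h₀ - p ≫ F) ≫ S.g = 0 := by
    rw [Preadditive.sub_comp, Category.assoc, hF, hE.exact.g_desc, sub_self]
  refine ⟨hS.exact.lift _ hd, ?_⟩
  rw [← cancel_mono S.f, Category.assoc, hS.exact.lift_f, Preadditive.comp_sub, hh₀,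
    ← Category.assoc, w, zero_comp, sub_zero, Category.id_comp]

lemma shortExact_kernel {X Y : C} (f : X ⟶ Y) [Epi f] :
    (ShortComplex.mk (kernel.ι f) f (kernel.condition f)).ShortExact :=
  .mk' (ShortComplex.exact_of_f_is_kernel _ (kernelIsKernel f)) inferInstance ‹_›

lemma shortExact_cokernel {X Y : C} (f : X ⟶ Y) [Mono f] :
    (ShortComplex.mk f (cokernel.π f) (cokernel.condition f)).ShortExact :=
  .mk' (ShortComplex.exact_of_g_is_cokernel _ (cokernelIsCokernel f)) ‹_› inferInstance

lemma coresolving_of_resolving [EnoughProjectives C] {𝒜 ℬ : C → Prop}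
    (h : IsCotorsionPair 𝒜 ℬ) (hres : ClassResolving 𝒜) : ClassCoresolving ℬ := by
  intro B'' B B' i p w hS hB'' hB
  refine (h.2 B').2 fun A hA => ?_
  have hP := shortExact_kernel (Projective.π A)
  have hPA : 𝒜 (Projective.over A) := (h.1 _).2 fun Y _ => ext1Vanish_of_projective _ Y
  have hK := hres _ _ _ _ _ _ hP hPA hA
  refine ext1Vanish_of_forall_extension hP fun f => ?_
  obtain ⟨g, hg⟩ := exists_lift_of_ext1Vanish hS f ((h.1 _).1 hK B'' hB'')
  obtain ⟨G, hG⟩ := exists_extension_of_ext1Vanish hP g ((h.1 A).1 hA B hB)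
  exact ⟨G ≫ p, by rw [← Category.assoc, hG, hg]⟩

lemma resolving_of_coresolving [EnoughInjectives C] {𝒜 ℬ : C → Prop}
    (h : IsCotorsionPair 𝒜 ℬ) (hcores : ClassCoresolving ℬ) : ClassResolving 𝒜 := by
  intro A'' A A' i p w hS hA hA'
  refine (h.1 A'').2 fun B hB => ?_
  have hI := shortExact_cokernel (Injective.ι B)
  have hIB : ℬ (Injective.under B) := (h.2 _).2 fun X _ => ext1Vanish_of_injective X _
  have hQ := hcores _ _ _ _ _ _ hI hB hIB
  refine ext1Vanish_of_forall_lift hI fun f => ?_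
  obtain ⟨g, hg⟩ := exists_extension_of_ext1Vanish hS f ((h.2 _).1 hQ A' hA')
  obtain ⟨G, hG⟩ := exists_lift_of_ext1Vanish hI g ((h.2 B).1 hB A hA)
  exact ⟨i ≫ G, by rw [Category.assoc, hG, hg]⟩

/-- For a cotorsion pair `(𝒜, ℬ)` in an abelian category with enough projectives and
injectives, `𝒜` is resolving (closed under kernels of epimorphisms between objects of
`𝒜`) if and only if `ℬ` is coresolving (closed under cokernels of monomorphisms between
objects of `ℬ`). -/
theorem resolving_iff_coresolving {C : Type u} [Category.{v} C] [Abelian C]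
    [EnoughProjectives C] [EnoughInjectives C] (𝒜 ℬ : C → Prop)
    (h : IsCotorsionPair 𝒜 ℬ) :
    ClassResolving 𝒜 ↔ ClassCoresolving ℬ :=
  ⟨coresolving_of_resolving h, resolving_of_coresolving h⟩
end

section
/- Let X be a left R-module with projective dimension at most n, and let x ∈ X. Then there exists a submodule X' ⊆ X containing x with card(X') ≤ κ, such that both X' and X/X' have projective dimension at most n, where κ is any infinite cardinal with κ ≥ card(R). -/
/-!
Fix a projective resolution `P` of `X` and splittings `sᵢ : Pᵢ → R^(Pᵢ)` of the canonical
surjections. If `S ⊆ Pᵢ` contains the `sᵢ`-support of each of its elements, then `span S` is a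
retract of the free module on `S` and `Pᵢ ⧸ span S` one of the free module on the complement of `S`,
so both are projective. Starting from a preimage of `x`, enlarge sets `Sᵢ ⊆ Pᵢ` countably often,
adding `sᵢ`-supports, the supports of the differentials of elements of `Sᵢ₊₁`, and of chosen
preimages of the boundaries in `span Sᵢ`. Every round keeps `|Sᵢ| ≤ κ`; in the limit the spans form
an exact subcomplex `P'` of `P`, and `P'` and `P ⧸ P'` resolve `X' = ε(P'₀)` and `X ⧸ X'`.
-/

open CategoryTheory

open LinearMap Submodule Cardinal

universe u v

theorem Cardinal.mk_finsupp_le {α β : Type u} [Zero β] {κ : Cardinal.{u}} (hκ : ℵ₀ ≤ κ)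
    (hα : #α ≤ κ) (hβ : #β ≤ κ) : #(α →₀ β) ≤ κ := by
  classical
  calc #(α →₀ β) ≤ #(Finset (α × β)) := mk_le_of_injective (Finsupp.graph_injective α β)
    _ ≤ #(List (α × β)) := mk_le_of_surjective List.toFinset_surjective
    _ ≤ max ℵ₀ #(α × β) := mk_list_le_max _
    _ ≤ κ := by
      rw [mk_prod, lift_id, lift_id]
      exact max_le hκ ((mul_le_mul' hα hβ).trans (mul_eq_self hκ).le)

theorem Submodule.mk_span_le {R M : Type u} [Semiring R] [AddCommMonoid M] [Module R M]
    {κ : Cardinal.{u}} (hκ : ℵ₀ ≤ κ) (hR : #R ≤ κ) {S : Set M} (hS : #S ≤ κ) :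
    #(span R S) ≤ κ := by
  have hrange : (span R S : Set M) = Set.range (Finsupp.linearCombination R ((↑) : S → M)) := by
    rw [← LinearMap.coe_range, Finsupp.range_linearCombination, Subtype.range_coe]
  calc #(span R S) = #(span R S : Set M) := rfl
    _ ≤ #(S →₀ R) := hrange ▸ mk_range_le
    _ ≤ κ := mk_finsupp_le hκ hS hR

theorem Cardinal.mk_iUnion_le_of_le {α ι : Type u} {κ : Cardinal.{u}} (hκ : ℵ₀ ≤ κ)
    {f : ι → Set α} (hι : #ι ≤ κ) (hf : ∀ i, #(f i) ≤ κ) : #(⋃ i, f i) ≤ κ :=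
  (mk_iUnion_le f).trans <| (mul_le_mul' hι (ciSup_le' hf)).trans (mul_eq_self hκ).le

theorem Cardinal.mk_iUnion_le_of_countable {α : Type u} {ι : Type v} [Countable ι]
    {κ : Cardinal.{u}} (hκ : ℵ₀ ≤ κ) {f : ι → Set α} (hf : ∀ i, #(f i) ≤ κ) :
    #(⋃ i, f i) ≤ κ := by
  rw [← lift_le.{v}]
  calc lift #(⋃ i, f i) ≤ lift #ι * ⨆ i, lift #(f i) := mk_iUnion_le_lift f
    _ ≤ ℵ₀ * lift κ :=
      mul_le_mul' (lift_le_aleph0.mpr mk_le_aleph0) (ciSup_le' fun i => lift_le.mpr (hf i))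
    _ = lift κ := aleph0_mul_eq (aleph0_le_lift.mpr hκ)

theorem Cardinal.mk_biUnion_finset_le {α β : Type u} {κ : Cardinal.{u}} (hκ : ℵ₀ ≤ κ)
    {s : Set α} (hs : #s ≤ κ) (t : α → Finset β) : #(⋃ a ∈ s, (t a : Set β)) ≤ κ := by
  rw [Set.biUnion_eq_iUnion]
  exact mk_iUnion_le_of_le hκ hs fun _ => (finset_card_lt_aleph0 _).le.trans hκ

theorem exists_small_closed_family {ι : Type v} {T : ι → Type u} {κ : Cardinal.{u}}
    (hκ : ℵ₀ ≤ κ) (Φ : (∀ i, Set (T i)) → ∀ i, Set (T i))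
    (hΦ_small : ∀ S, (∀ i, #(S i) ≤ κ) → ∀ i, #(Φ S i) ≤ κ)
    (hΦ_iSup : ∀ S : ℕ → ∀ i, Set (T i), Monotone S → Φ (⨆ k, S k) ≤ ⨆ k, Φ (S k))
    (S₀ : ∀ i, Set (T i)) (hS₀ : ∀ i, #(S₀ i) ≤ κ) :
    ∃ S, S₀ ≤ S ∧ Φ S ≤ S ∧ ∀ i, #(S i) ≤ κ := by
  let S : ℕ → ∀ i, Set (T i) := fun k => (fun S => S ⊔ Φ S)^[k] S₀
  have hS_succ (k : ℕ) : S (k + 1) = S k ⊔ Φ (S k) := Function.iterate_succ_apply' _ _ _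
  have hS_mono : Monotone S := monotone_nat_of_le_succ fun k => hS_succ k ▸ le_sup_left
  have hS_small (k : ℕ) (i : ι) : #(S k i) ≤ κ := by
    induction k generalizing i with
    | zero => exact hS₀ i
    | succ k ih =>
      rw [hS_succ]
      exact (mk_union_le _ _).trans (add_le_of_le hκ (ih i) (hΦ_small _ ih i))
  refine ⟨⨆ k, S k, le_iSup S 0, ?_, fun i => ?_⟩
  · refine (hΦ_iSup S hS_mono).trans (iSup_le fun k => ?_)
    exact (le_sup_right.trans (hS_succ k).ge).trans (le_iSup S (k + 1))
  · rw [iSup_apply, Set.iSup_eq_iUnion]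
    exact mk_iUnion_le_of_countable hκ fun k => hS_small k i

theorem Function.Exact.exact_restrict {R M N P : Type*} [Ring R] [AddCommGroup M]
    [AddCommGroup N] [AddCommGroup P] [Module R M] [Module R N] [Module R P]
    {f : M →ₗ[R] N} {g : N →ₗ[R] P} (hfg : Function.Exact f g) {p : Submodule R M}
    {q : Submodule R N} {r : Submodule R P} (hpq : p ≤ q.comap f) (hqr : q ≤ r.comap g)
    (hlift : range f ⊓ q ≤ p.map f) :
    Function.Exact (f.restrict hpq) (g.restrict hqr) := by
  intro y
  constructor
  · intro hy
    obtain ⟨x, hx, hxy⟩ := hlift ⟨(hfg y).mp (congrArg Subtype.val hy), y.2⟩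
    exact ⟨⟨x, hx⟩, Subtype.ext hxy⟩
  · rintro ⟨x, rfl⟩
    exact Subtype.ext (hfg.apply_apply_eq_zero x.1)

section Retract

variable {R M F : Type*} [Ring R] [AddCommGroup M] [Module R M] [AddCommGroup F] [Module R F]
  {s : M →ₗ[R] F} {π : F →ₗ[R] M} {N : Submodule R F}

theorem Module.Projective.comap_of_leftInverse [Module.Projective R N]
    (hπs : Function.LeftInverse π s) (hN : N.map π ≤ N.comap s) :
    Module.Projective R (N.comap s) :=
  .of_split (s.restrict fun _ h => h) (π.restrict fun _ h => hN (mem_map_of_mem h))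
    (LinearMap.ext fun x => Subtype.ext (hπs x))

theorem Module.Projective.quotient_comap_of_leftInverse [Module.Projective R (F ⧸ N)]
    (hπs : Function.LeftInverse π s) (hN : N.map π ≤ N.comap s) :
    Module.Projective R (M ⧸ N.comap s) :=
  .of_split (mapQ _ _ s le_rfl) (mapQ _ _ π (map_le_iff_le_comap.mp hN)) <| by
    ext x
    simp [hπs x]

end Retract

theorem Finsupp.isCompl_supported_supported {R α : Type*} [Semiring R] {S T : Set α}
    (h : IsCompl S T) : IsCompl (supported R R S) (supported R R T) :=
  ⟨disjoint_supported_supported h.disjoint, codisjoint_supported_supported h.codisjoint⟩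

section SupportClosed

variable {R M : Type*} [Ring R] [AddCommGroup M] [Module R M] {s : M →ₗ[R] M →₀ R} {S : Set M}

theorem Finsupp.map_linearCombination_id_supported :
    (supported R R S).map (linearCombination R id) = span R S := by
  rw [← span_image_eq_map_linearCombination, Set.image_id]

theorem Finsupp.mem_span_support_of_leftInverse
    (hs : Function.LeftInverse (linearCombination R id) s) (x : M) :
    x ∈ span R ↑(s x).support := by
  have h := mem_map_of_mem (f := linearCombination R id) (mem_supported_support R (s x))
  rwa [hs x, map_linearCombination_id_supported] at h

theorem Finsupp.span_eq_comap_supported (hs : Function.LeftInverse (linearCombination R id) s)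
    (hS : ∀ c ∈ S, ↑(s c).support ⊆ S) : span R S = (supported R R S).comap s := by
  refine le_antisymm (span_le.mpr hS) fun x hx => ?_
  rw [← hs x, ← map_linearCombination_id_supported]
  exact mem_map_of_mem hx

theorem Module.Projective.span_of_support_subset
    (hs : Function.LeftInverse (Finsupp.linearCombination R id) s)
    (hS : ∀ c ∈ S, ↑(s c).support ⊆ S) : Module.Projective R (span R S) := by
  have : Module.Projective R (Finsupp.supported R R S) :=
    .of_equiv (Finsupp.supportedEquivFinsupp S).symm
  rw [Finsupp.span_eq_comap_supported hs hS]
  refine .comap_of_leftInverse hs ?_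
  rw [Finsupp.map_linearCombination_id_supported, ← Finsupp.span_eq_comap_supported hs hS]

theorem Module.Projective.quotient_span_of_support_subset
    (hs : Function.LeftInverse (Finsupp.linearCombination R id) s)
    (hS : ∀ c ∈ S, ↑(s c).support ⊆ S) : Module.Projective R (M ⧸ span R S) := by
  have : Module.Projective R (Finsupp.supported R R Sᶜ) :=
    .of_equiv (Finsupp.supportedEquivFinsupp Sᶜ).symm
  have : Module.Projective R ((M →₀ R) ⧸ Finsupp.supported R R S) :=
    .of_equiv (quotientEquivOfIsCompl _ _ (Finsupp.isCompl_supported_supported isCompl_compl)).symm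
  rw [Finsupp.span_eq_comap_supported hs hS]
  refine .quotient_comap_of_leftInverse hs ?_
  rw [Finsupp.map_linearCombination_id_supported, ← Finsupp.span_eq_comap_supported hs hS]

end SupportClosed

namespace ResolutionOfLength

section Subcomplex

variable {R : Type} [Ring R] {n : ℕ} {X : ModuleCat.{u} R} (res : ResolutionOfLength R n X)
  (P' : ∀ i, Submodule R (res.P i)) (hd : ∀ i, P' (i + 1) ≤ (P' i).comap (res.d i).hom)
  (hlift : ∀ i, range (res.d i).hom ⊓ P' i ≤ (P' (i + 1)).map (res.d i).hom)

noncomputable def restrict : ResolutionOfLength R n (.of R ((P' 0).map res.ε.hom)) where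
  P i := .of R (P' i)
  d i := ModuleCat.ofHom ((res.d i).hom.restrict (hd i))
  ε := ModuleCat.ofHom (res.ε.hom.restrict (le_comap_map _ _))
  surj := by
    rintro ⟨_, p, hp, rfl⟩
    exact ⟨⟨p, hp⟩, rfl⟩
  exact₀ := res.exact₀.exact_restrict (f := (res.d 0).hom) (hd 0) (le_comap_map _ _) (hlift 0)
  exact i :=
    (res.exact i).exact_restrict (f := (res.d (i + 1)).hom) (hd (i + 1)) (hd i) (hlift (i + 1))
  bounded i hi :=
    have := res.bounded i hi
    inferInstanceAs (Subsingleton (P' i))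

noncomputable def quotient : ResolutionOfLength R n (.of R (X ⧸ (P' 0).map res.ε.hom)) where
  P i := .of R (res.P i ⧸ P' i)
  d i := ModuleCat.ofHom (mapQ _ _ (res.d i).hom (hd i))
  ε := ModuleCat.ofHom (mapQ _ _ res.ε.hom (le_comap_map _ _))
  surj y := by
    obtain ⟨y, rfl⟩ := mkQ_surjective _ y
    obtain ⟨p, rfl⟩ := res.surj y
    exact ⟨mkQ _ p, rfl⟩
  exact₀ := (Function.Exact.exact_mapQ_iff (f := (res.d 0).hom) res.exact₀ (hd 0)
    (le_comap_map _ _)).mpr inf_le_right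
  exact i := (Function.Exact.exact_mapQ_iff (f := (res.d (i + 1)).hom) (res.exact i)
    (hd (i + 1)) (hd i)).mpr (hlift i)
  bounded i hi :=
    have := res.bounded i hi
    (mkQ_surjective (P' i)).subsingleton

end Subcomplex

section ZigZag

variable {R : Type} [Ring R] {n : ℕ} {X : ModuleCat.{0} R} (res : ResolutionOfLength R n X)
  (s : ∀ i, res.P i →ₗ[R] res.P i →₀ R)

/-- On the boundaries in `span R (S i)`, `Function.invFun` picks preimages under `d i`; its junk
values elsewhere only enlarge the sets and are harmless. -/
noncomputable def preimages (S : ∀ i, Set (res.P i)) : ∀ i, Set (res.P i)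
  | 0 => ∅
  | i + 1 => Function.invFun (res.d i).hom '' span R (S i)

noncomputable def generators (S : ∀ i, Set (res.P i)) (i : ℕ) : Set (res.P i) :=
  S i ∪ (res.d i).hom '' S (i + 1) ∪ res.preimages S i

noncomputable def zigZag (S : ∀ i, Set (res.P i)) (i : ℕ) : Set (res.P i) :=
  ⋃ q ∈ res.generators S i, ↑(s i q).support

theorem mk_zigZag_le {κ : Cardinal} (hκ : ℵ₀ ≤ κ) (hR : #R ≤ κ) {S : ∀ i, Set (res.P i)}
    (hS : ∀ i, #(S i) ≤ κ) (i : ℕ) : #(res.zigZag s S i) ≤ κ := by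
  have hpre : #(res.preimages S i) ≤ κ := by
    cases i with
    | zero => simp [preimages]
    | succ i => exact mk_image_le.trans (mk_span_le hκ hR (hS i))
  refine mk_biUnion_finset_le hκ ((mk_union_le _ _).trans (add_le_of_le hκ ?_ hpre)) _
  exact (mk_union_le _ _).trans (add_le_of_le hκ (hS i) (mk_image_le.trans (hS (i + 1))))

theorem preimages_iSup_le {S : ℕ → ∀ i, Set (res.P i)} (hS : Monotone S) :
    res.preimages (⨆ k, S k) ≤ ⨆ k, res.preimages (S k) := by
  rintro (_ | i)
  · simp [preimages]
  rintro _ ⟨p, hp, rfl⟩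
  have hdir : Directed (· ≤ ·) fun k => span R (S k i) :=
    Monotone.directed_le fun _ _ hkl => span_mono (hS hkl i)
  rw [iSup_apply, Set.iSup_eq_iUnion, span_iUnion, SetLike.mem_coe,
    mem_iSup_of_directed _ hdir] at hp
  obtain ⟨k, hk⟩ := hp
  exact le_iSup (fun k => res.preimages (S k)) k (i + 1) ⟨p, hk, rfl⟩

theorem generators_iSup_le {S : ℕ → ∀ i, Set (res.P i)} (hS : Monotone S) :
    res.generators (⨆ k, S k) ≤ ⨆ k, res.generators (S k) := by
  intro i q hq
  have hpre := res.preimages_iSup_le hS i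
  simp only [generators, iSup_apply, Set.iSup_eq_iUnion, Set.mem_iUnion, Set.mem_union,
    Set.mem_image] at hq hpre ⊢
  rcases hq with (⟨k, hq⟩ | ⟨p, ⟨k, hp⟩, rfl⟩) | hq
  · exact ⟨k, .inl (.inl hq)⟩
  · exact ⟨k, .inl (.inr ⟨p, hp, rfl⟩)⟩
  · obtain ⟨k, hk⟩ := Set.mem_iUnion.mp (hpre hq)
    exact ⟨k, .inr hk⟩

theorem zigZag_iSup_le {S : ℕ → ∀ i, Set (res.P i)} (hS : Monotone S) :
    res.zigZag s (⨆ k, S k) ≤ ⨆ k, res.zigZag s (S k) := by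
  intro i q hq
  simp only [zigZag, iSup_apply, Set.iSup_eq_iUnion, Set.mem_iUnion] at hq ⊢
  obtain ⟨g, hg, hq⟩ := hq
  have hg' := res.generators_iSup_le hS i hg
  simp only [iSup_apply, Set.iSup_eq_iUnion, Set.mem_iUnion] at hg'
  obtain ⟨k, hk⟩ := hg'
  exact ⟨k, g, hk, hq⟩

variable {s} {S : ∀ i, Set (res.P i)}

theorem mem_span_of_mem_generators
    (hs : ∀ i, Function.LeftInverse (Finsupp.linearCombination R id) (s i))
    (hS : res.zigZag s S ≤ S) {i : ℕ} {q : res.P i} (hq : q ∈ res.generators S i) :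
    q ∈ span R (S i) :=
  span_mono (fun _ hc => hS i (Set.mem_biUnion hq hc))
    (Finsupp.mem_span_support_of_leftInverse (hs i) q)

theorem support_subset_of_zigZag_le (hS : res.zigZag s S ≤ S) {i : ℕ} {c : res.P i}
    (hc : c ∈ S i) : ↑(s i c).support ⊆ S i :=
  fun _ h => hS i (Set.mem_biUnion (Or.inl (Or.inl hc)) h)

theorem span_le_comap_span (hs : ∀ i, Function.LeftInverse (Finsupp.linearCombination R id) (s i))
    (hS : res.zigZag s S ≤ S) (i : ℕ) :
    span R (S (i + 1)) ≤ (span R (S i)).comap (res.d i).hom :=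
  span_le.mpr fun c hc => res.mem_span_of_mem_generators hs hS (Or.inl (Or.inr ⟨c, hc, rfl⟩))

theorem range_inf_span_le_map_span
    (hs : ∀ i, Function.LeftInverse (Finsupp.linearCombination R id) (s i))
    (hS : res.zigZag s S ≤ S) (i : ℕ) :
    range (res.d i).hom ⊓ span R (S i) ≤ (span R (S (i + 1))).map (res.d i).hom := by
  rintro p ⟨hp, hpS⟩
  exact ⟨_, res.mem_span_of_mem_generators hs hS (Or.inr ⟨p, hpS, rfl⟩), Function.invFun_eq hp⟩

theorem exists_small_subcomplex (hp : ∀ i, Module.Projective R (res.P i)) {κ : Cardinal}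
    (hκ : ℵ₀ ≤ κ) (hR : #R ≤ κ) (x₀ : res.P 0) :
    ∃ P' : ∀ i, Submodule R (res.P i), x₀ ∈ P' 0 ∧
      (∀ i, P' (i + 1) ≤ (P' i).comap (res.d i).hom) ∧
      (∀ i, range (res.d i).hom ⊓ P' i ≤ (P' (i + 1)).map (res.d i).hom) ∧
      (∀ i, #(P' i) ≤ κ) ∧ (∀ i, Module.Projective R (P' i)) ∧
      ∀ i, Module.Projective R (res.P i ⧸ P' i) := by
  choose s hs using fun i => Module.projective_def.mp (hp i)
  let S₀ : ∀ i, Set (res.P i) := Function.update (fun _ => ∅) 0 {x₀}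
  have hS₀ (i : ℕ) : #(S₀ i) ≤ κ := by
    rcases eq_or_ne i 0 with rfl | hi
    · simpa [S₀] using one_le_aleph0.trans hκ
    · simp [S₀, Function.update_of_ne hi]
  obtain ⟨S, hS₀S, hS, hSκ⟩ := exists_small_closed_family hκ (res.zigZag s)
    (fun _ => res.mk_zigZag_le s hκ hR) (fun _ => res.zigZag_iSup_le s) S₀ hS₀
  have hclosed (i : ℕ) : ∀ c ∈ S i, ↑(s i c).support ⊆ S i :=
    fun _ => res.support_subset_of_zigZag_le hS
  exact ⟨fun i => span R (S i), subset_span (hS₀S 0 (by simp [S₀])),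
    res.span_le_comap_span hs hS, res.range_inf_span_le_map_span hs hS,
    fun i => mk_span_le hκ hR (hSκ i), fun i => .span_of_support_subset (hs i) (hclosed i),
    fun i => .quotient_span_of_support_subset (hs i) (hclosed i)⟩

end ZigZag

end ResolutionOfLength

/-- If `X` is a left `R`-module of projective dimension at most `n` and `x ∈ X`, then
there is a submodule `X' ⊆ X` containing `x`, of cardinality at most `κ` (where `κ` is
any infinite cardinal with `κ ≥ card R`), such that both `X'` and `X/X'` have projective
dimension at most `n`. -/
theorem small_nProjective_submodule (R : Type) [Ring R] (n : ℕ) (κ : Cardinal)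
    (hκ : Cardinal.aleph0 ≤ κ) (hκR : Cardinal.mk R ≤ κ)
    (X : Type) [AddCommGroup X] [Module R X]
    (hX : HasProjDimLE R n (ModuleCat.of R X)) (x : X) :
    ∃ X' : Submodule R X, x ∈ X' ∧ Cardinal.mk X' ≤ κ ∧
      HasProjDimLE R n (ModuleCat.of R X') ∧
      HasProjDimLE R n (ModuleCat.of R (X ⧸ X')) := by
  obtain ⟨res, hp⟩ := hX
  obtain ⟨x₀, rfl⟩ := res.surj x
  obtain ⟨P', hx₀, hd, hlift, hκP', hP', hquot⟩ := res.exists_small_subcomplex hp hκ hκR x₀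
  exact ⟨(P' 0).map res.ε.hom, mem_map_of_mem hx₀, mk_image_le.trans (hκP' 0),
    ⟨res.restrict P' hd hlift, hP'⟩, ⟨res.quotient P' hd hlift, hquot⟩⟩
end
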